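/- For any virtual knot K, the real crossing number c_r(K) is at least the degree of the odd writhe polynomial, where Deg f_K(t) = max{|i| : coefficient of t^i in f_K is nonzero}. At the diagram level: for any signed oriented chord diagram with n chords, every exponent N(c) appearing in f(t) satisfies |N(c)| ≤ n. -/

import Mathlib

open Finset LaurentPolynomial

/-- A signed, oriented chord diagram (combinatorial Gauss diagram) with `n` chords:
the `2*n` chord endpoints on the circle are the elements of `Fin (2*n)` in (positive)
cyclic order; chord `i` has over endpoint `c⁺ = ep (i, true)`, under endpoint
`c⁻ = ep (i, false)` and a sign (writhe) `sign i ∈ {1, -1}`. -/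
structure ChordDiagram (n : ℕ) where
  ep : Fin n × Bool ≃ Fin (2 * n)
  sign : Fin n → ℤ
  sign_unit : ∀ i, sign i = 1 ∨ sign i = -1

namespace ChordDiagram

variable {n : ℕ}

/-- the over endpoint `c⁺` of a chord -/
def overEnd (D : ChordDiagram n) (i : Fin n) : Fin (2 * n) := D.ep (i, true)

/-- the under endpoint `c⁻` of a chord -/
def under (D : ChordDiagram n) (i : Fin n) : Fin (2 * n) := D.ep (i, false)

/-- the number of steps from `b` to `x`, travelling in the positive direction
around the circle -/
def relpos (b x : Fin (2 * n)) : ℕ := (x.val + 2 * n - b.val) % (2 * n)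

/-- `x` lies strictly between the endpoints of chord `i`, on the side swept out
going from `c⁺` to `c⁻` in the positive direction -/
def StrictlyBetween (D : ChordDiagram n) (i : Fin n) (x : Fin (2 * n)) : Prop :=
  0 < relpos (D.overEnd i) x ∧ relpos (D.overEnd i) x < relpos (D.overEnd i) (D.under i)

instance (D : ChordDiagram n) (i : Fin n) (x : Fin (2 * n)) :
    Decidable (D.StrictlyBetween i x) := inferInstanceAs (Decidable (_ ∧ _))

/-- two distinct chords interlink if their endpoints alternate around the circle,
i.e. exactly one endpoint of `j` lies strictly between the endpoints of `i` -/
def Interlinks (D : ChordDiagram n) (i j : Fin n) : Prop :=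
  i ≠ j ∧ Xor' (D.StrictlyBetween i (D.overEnd j)) (D.StrictlyBetween i (D.under j))

instance (D : ChordDiagram n) (i j : Fin n) : Decidable (D.Interlinks i j) := by
  unfold Interlinks Xor'; infer_instance

/-- the number of chords interlinking chord `i` -/
def interlinkCount (D : ChordDiagram n) (i : Fin n) : ℕ :=
  (univ.filter fun j => D.Interlinks i j).card

/-- the number of chord endpoints lying (strictly) on one side of chord `i` -/
def sideCount (D : ChordDiagram n) (i : Fin n) : ℕ :=
  (univ.filter fun x => D.StrictlyBetween i x).card

/-- a chord is odd if it interlinks an odd number of other chords -/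
def OddChord (D : ChordDiagram n) (i : Fin n) : Prop := Odd (D.interlinkCount i)

instance (D : ChordDiagram n) (i : Fin n) : Decidable (D.OddChord i) :=
  inferInstanceAs (Decidable (Odd _))

/-- The label `N(a)` of the arc whose terminal point is `a`: the sum of the signs of
all chords whose over endpoint is met strictly before their under endpoint when
traversing the circle once in the positive direction starting inside this arc. -/
def arcLabel (D : ChordDiagram n) (a : Fin (2 * n)) : ℤ :=
  ∑ i ∈ univ.filter fun i => relpos a (D.overEnd i) < relpos a (D.under i), D.sign i

/-- The value `N(c)` of a chord: for a positive chord, the difference `x - y` of the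
arc labels just before `c⁺` and just before `c⁻`; for a negative chord, the difference
`z - w` of the arc labels just after `c⁺` and just after `c⁻` (the label just after an
over endpoint is the label just before it minus the sign, and the label just after an
under endpoint is the label just before it plus the sign). -/
def chordVal (D : ChordDiagram n) (i : Fin n) : ℤ :=
  if D.sign i = 1 then D.arcLabel (D.overEnd i) - D.arcLabel (D.under i)
  else (D.arcLabel (D.overEnd i) - D.sign i) - (D.arcLabel (D.under i) + D.sign i)

/-- the odd writhe `J(K) = Σ_{c odd} w(c)` -/
def oddWrithe (D : ChordDiagram n) : ℤ :=
  ∑ i ∈ univ.filter fun i => D.OddChord i, D.sign i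

/-- the odd writhe polynomial `f_K(t) = Σ_{c odd} w(c) · t^{N(c)} ∈ ℤ[t,t⁻¹]` -/
noncomputable def owp (D : ChordDiagram n) : LaurentPolynomial ℤ :=
  ∑ i ∈ univ.filter fun i => D.OddChord i, C (D.sign i) * T (D.chordVal i)

/-- evaluation of the odd writhe polynomial at a rational number `x`:
`Σ_{c odd} w(c) · x^{N(c)}` -/
def owpEval (D : ChordDiagram n) (x : ℚ) : ℚ :=
  ∑ i ∈ univ.filter fun i => D.OddChord i, (D.sign i : ℚ) * x ^ D.chordVal i

/-- the coefficient of `t^k` in a Laurent polynomial -/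
def coeffOf (f : LaurentPolynomial ℤ) (k : ℤ) : ℤ := (AddMonoidAlgebra.coeff f) k

/-- the degree `Deg f = max { |i| : coefficient of tⁱ in f is nonzero }` -/
def owpDeg (f : LaurentPolynomial ℤ) : ℕ := (AddMonoidAlgebra.coeff f).support.sup fun k => k.natAbs

/-- reversing the orientation of the knot: the cyclic order of the endpoints is
reversed, while signs and over/under data of the crossings are preserved -/
def reverse (D : ChordDiagram n) : ChordDiagram n where
  ep := D.ep.trans Fin.revPerm
  sign := D.sign
  sign_unit := D.sign_unit

/-- the mirror image: every crossing is switched, so every chord's over and under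
endpoints are exchanged and its sign is negated -/
def mirror (D : ChordDiagram n) : ChordDiagram n where
  ep := (Equiv.prodCongr (Equiv.refl (Fin n))
      ⟨fun b => !b, fun b => !b, Bool.not_not, Bool.not_not⟩).trans D.ep
  sign := fun i => -D.sign i
  sign_unit := fun i => (D.sign_unit i).elim
    (fun h => Or.inr (show -D.sign i = -1 by rw [h]))
    (fun h => Or.inl (show -D.sign i = 1 by rw [h]; ring))

/-! ### Planarity via the Euler characteristic of the carrier surface

The diagram determines a 4-valent graph (vertices = chords, edges = the `2*n` arcs of
the circle) together with a rotation system at each vertex, coming from the structure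
of a transversal crossing: for a positive crossing the counterclockwise order of the
four ends is (over-out, under-out, over-in, under-in), for a negative crossing it is
(over-out, under-in, over-in, under-out).  The diagram is realizable by a classical
(planar) knot diagram iff the resulting closed oriented carrier surface is a sphere,
i.e. iff `V - E + F = n - 2n + F = 2`.

Darts are encoded as pairs `(p, io) : Fin (2*n) × Bool`, meaning the end of an arc
at the vertex through the circle point `p`, with `io = true` for the outgoing arc
(from `p` to `p+1`) and `io = false` for the incoming arc (from `p-1` to `p`). -/

/-- the other endpoint of the chord through a given endpoint -/
def otherEnd (D : ChordDiagram n) (p : Fin (2 * n)) : Fin (2 * n) :=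
  D.ep ((D.ep.symm p).1, !(D.ep.symm p).2)

lemma otherEnd_otherEnd (D : ChordDiagram n) (p : Fin (2 * n)) :
    D.otherEnd (D.otherEnd p) = p := by
  simp [otherEnd]

/-- whether the rotation at the vertex toggles the in/out marker when passing from
the end at `p` to the end at the other endpoint of its chord -/
def tog (D : ChordDiagram n) (p : Fin (2 * n)) : Bool :=
  if D.sign (D.ep.symm p).1 = 1 then !(D.ep.symm p).2 else (D.ep.symm p).2

/-- the vertex rotation permutation on darts -/
def vertexPerm (D : ChordDiagram n) : Equiv.Perm (Fin (2 * n) × Bool) :=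
  Equiv.trans
    ⟨fun x => (x.1, xor x.2 (D.tog x.1)), fun x => (x.1, xor x.2 (D.tog x.1)),
      fun x => by simp [Bool.xor_assoc], fun x => by simp [Bool.xor_assoc]⟩
    ⟨fun x => (D.otherEnd x.1, x.2), fun x => (D.otherEnd x.1, x.2),
      fun x => by simp [otherEnd_otherEnd], fun x => by simp [otherEnd_otherEnd]⟩

/-- the edge involution on darts, matching the two ends of each arc -/
def arcPerm (D : ChordDiagram n) : Equiv.Perm (Fin (2 * n) × Bool) :=
  ⟨fun x => if x.2 then (finRotate (2 * n) x.1, false) else ((finRotate (2 * n)).symm x.1, true),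
   fun x => if x.2 then (finRotate (2 * n) x.1, false) else ((finRotate (2 * n)).symm x.1, true),
   fun x => by rcases x with ⟨p, _ | _⟩ <;> simp only [Bool.false_eq_true, if_false, if_true, Equiv.apply_symm_apply, Equiv.symm_apply_apply],
   fun x => by rcases x with ⟨p, _ | _⟩ <;> simp only [Bool.false_eq_true, if_false, if_true, Equiv.apply_symm_apply, Equiv.symm_apply_apply]⟩

/-- the face permutation on darts -/
def facePerm (D : ChordDiagram n) : Equiv.Perm (Fin (2 * n) × Bool) :=
  (D.arcPerm).trans D.vertexPerm

/-- the number of faces: the number of orbits of the face permutation -/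
noncomputable def faceCount (D : ChordDiagram n) : ℕ :=
  Nat.card (MulAction.orbitRel.Quotient (Subgroup.zpowers D.facePerm) (Fin (2 * n) × Bool))

/-- the chord diagram arises from a classical (planar) knot diagram: the carrier
surface has Euler characteristic `V - E + F = n - 2n + faceCount = 2` -/
def PlanarRealizable (D : ChordDiagram n) : Prop := D.faceCount = n + 2

end ChordDiagram


open ChordDiagram

/-!
Write `x` and `y` for the arc labels just before `c⁺` and `c⁻`. Each chord `j` contributes
`w(j)` or `0` to either label, so `x - y` is a sum of `n` terms of absolute value at most `1`;
chord `c` itself contributes exactly `w(c)`. In both sign cases `N(c) = x - y - w(c) + 1`,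
which is therefore `1` plus a sum of `n - 1` terms in `[-1, 1]`.
-/

namespace ChordDiagram

variable {n : ℕ}

lemma relpos_self (x : Fin (2 * n)) : relpos x x = 0 := by
  simp [relpos]

lemma relpos_pos_of_ne {b x : Fin (2 * n)} (h : x ≠ b) : 0 < relpos b x := by
  have hxb := Fin.val_ne_of_ne h
  have hx := x.isLt
  unfold relpos
  rcases le_or_gt b.val x.val with hle | hlt
  · rw [show x.val + 2 * n - b.val = x.val - b.val + 2 * n by omega, Nat.add_mod_right,
      Nat.mod_eq_of_lt (by omega)]
    omega
  · rw [Nat.mod_eq_of_lt (by omega)]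
    omega

variable (D : ChordDiagram n)

lemma overEnd_ne_under (i : Fin n) : D.overEnd i ≠ D.under i :=
  D.ep.injective.ne (by simp)

def arcLabelTerm (a : Fin (2 * n)) (j : Fin n) : ℤ :=
  if relpos a (D.overEnd j) < relpos a (D.under j) then D.sign j else 0

lemma arcLabel_eq_sum (a : Fin (2 * n)) : D.arcLabel a = ∑ j, D.arcLabelTerm a j :=
  Finset.sum_filter _ _

lemma abs_arcLabelTerm_sub_le (a b : Fin (2 * n)) (j : Fin n) :
    |D.arcLabelTerm a j - D.arcLabelTerm b j| ≤ 1 := by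
  unfold arcLabelTerm
  rcases D.sign_unit j with h | h <;> split_ifs <;> simp [h]

lemma arcLabelTerm_overEnd_self (i : Fin n) : D.arcLabelTerm (D.overEnd i) i = D.sign i := by
  rw [arcLabelTerm, if_pos]
  rw [relpos_self]
  exact relpos_pos_of_ne (D.overEnd_ne_under i).symm

lemma arcLabelTerm_under_self (i : Fin n) : D.arcLabelTerm (D.under i) i = 0 := by
  rw [arcLabelTerm, if_neg]
  rw [relpos_self]
  exact Nat.not_lt_zero _

lemma chordVal_eq (i : Fin n) :
    D.chordVal i = D.arcLabel (D.overEnd i) - D.arcLabel (D.under i) - D.sign i + 1 := by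
  unfold chordVal
  rcases D.sign_unit i with h | h <;> simp only [h, if_true, reduceCtorEq, if_false] <;> ring

lemma chordVal_eq_one_add_sum (i : Fin n) :
    D.chordVal i = 1 + ∑ j ∈ univ.erase i,
      (D.arcLabelTerm (D.overEnd i) j - D.arcLabelTerm (D.under i) j) := by
  rw [chordVal_eq, arcLabel_eq_sum, arcLabel_eq_sum, ← sum_sub_distrib,
    ← add_sum_erase _ _ (mem_univ i), arcLabelTerm_overEnd_self, arcLabelTerm_under_self]
  ring

theorem natAbs_chordVal_le (i : Fin n) : (D.chordVal i).natAbs ≤ n := by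
  have hsum : |∑ j ∈ univ.erase i,
      (D.arcLabelTerm (D.overEnd i) j - D.arcLabelTerm (D.under i) j)| ≤ (n - 1 : ℕ) := by
    calc _ ≤ ∑ j ∈ univ.erase i,
            |D.arcLabelTerm (D.overEnd i) j - D.arcLabelTerm (D.under i) j| :=
          abs_sum_le_sum_abs _ _
      _ ≤ (univ.erase i).card • (1 : ℤ) :=
          sum_le_card_nsmul _ _ _ fun j _ => D.abs_arcLabelTerm_sub_le _ _ j
      _ = (n - 1 : ℕ) := by simp [card_erase_of_mem]
  have hn : 1 ≤ n := i.pos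
  rw [chordVal_eq_one_add_sum]
  rw [abs_le] at hsum
  omega

end ChordDiagram

lemma owpDeg_sum_C_mul_T_le {ι : Type*} (s : Finset ι) (a e : ι → ℤ) {m : ℕ}
    (h : ∀ i ∈ s, (e i).natAbs ≤ m) : owpDeg (∑ i ∈ s, C (a i) * T (e i)) ≤ m := by
  refine Finset.sup_le fun k hk => ?_
  simp only [← single_eq_C_mul_T, AddMonoidAlgebra.coeff_sum,
    AddMonoidAlgebra.coeff_single] at hk
  obtain ⟨i, hi, hki⟩ := mem_biUnion.mp (Finsupp.support_finsetSum hk)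
  rw [Finset.mem_singleton.mp (Finsupp.support_single_subset hki)]
  exact h i hi

/-- for a diagram with `n` chords, every exponent `N(c)` appearing in
the odd writhe polynomial satisfies `|N(c)| ≤ n`; hence `Deg f ≤ n`, so the real
crossing number of a virtual knot is at least the degree of its odd writhe
polynomial. -/
theorem stmt_8 {n : ℕ} (D : ChordDiagram n) :
    (∀ i : Fin n, D.OddChord i → (D.chordVal i).natAbs ≤ n) ∧ owpDeg D.owp ≤ n :=
  ⟨fun i _ => D.natAbs_chordVal_le i,
    owpDeg_sum_C_mul_T_le _ _ _ fun i _ => D.natAbs_chordVal_le i⟩
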